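/- arXiv:1602.03813 — 2 statements merged into one kernel-verified Lean document; each statement's English description precedes it below -/
import Mathlib

section
/- Let φ be continuous on B_R ⊆ ℝ^d and suppose for some s ∈ (h, R) and a vector p ∈ ℝ^d that s^{-2} osc_{B_s}(φ(y) − p·y) ≤ M. Then |p| ≤ (2s)^{-1} osc_{B_s}(φ(y) − p·y) + (2s)^{-1} osc_{B_s} φ, and consequently (2/s) osc_{B_{s/2}} φ ≤ 3 s M + s^{-1} osc_{B_s} φ. -/
/-! Testing `φ − p·y` at the antipodal points `±y` of `B_s` isolates `2 p·y`, so
`2 p·y ≤ osc_{B_s}(φ − p·y) + osc_{B_s} φ`; taking `y` towards `s p / |p|` gives the bound on `|p|`.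
On `B_{s/2}` the linear part `p·y` oscillates by at most `s |p|`, so
`osc_{B_{s/2}} φ ≤ osc_{B_s}(φ − p·y) + s |p|`, and the second estimate follows by combining the two
with `osc_{B_s}(φ − p·y) ≤ s² M`. -/

open Metric Set

/-- Oscillation of a function over a set. -/
noncomputable def osc {d : ℕ} (f : EuclideanSpace ℝ (Fin d) → ℝ)
    (U : Set (EuclideanSpace ℝ (Fin d))) : ℝ :=
  sSup (f '' U) - sInf (f '' U)

open Bornology

section
variable {d : ℕ} {f : EuclideanSpace ℝ (Fin d) → ℝ} {U : Set (EuclideanSpace ℝ (Fin d))}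

lemma sub_le_osc (hf : IsBounded (f '' U)) {x y : EuclideanSpace ℝ (Fin d)} (hx : x ∈ U)
    (hy : y ∈ U) : f x - f y ≤ osc f U := by
  have hsup : f x ≤ sSup (f '' U) := le_csSup hf.bddAbove (mem_image_of_mem f hx)
  have hinf : sInf (f '' U) ≤ f y := csInf_le hf.bddBelow (mem_image_of_mem f hy)
  unfold osc
  linarith

lemma osc_le_of_forall_sub_le (hU : U.Nonempty) {C : ℝ}
    (h : ∀ x ∈ U, ∀ y ∈ U, f x - f y ≤ C) : osc f U ≤ C := by
  rw [osc, sub_le_iff_le_add]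
  refine csSup_le (hU.image f) ?_
  rintro _ ⟨x, hx, rfl⟩
  rw [add_comm, ← sub_le_iff_le_add]
  refine le_csInf (hU.image f) ?_
  rintro _ ⟨y, hy, rfl⟩
  linarith [h x hx y hy]

lemma isBounded_image_sub_inner (hU : IsBounded U) (hf : IsBounded (f '' U))
    (p : EuclideanSpace ℝ (Fin d)) : IsBounded ((fun y => f y - inner ℝ p y) '' U) := by
  obtain ⟨C, hC⟩ := isBounded_iff_forall_norm_le.1 hf
  obtain ⟨D, hD⟩ := isBounded_iff_forall_norm_le.1 hU
  refine isBounded_iff_forall_norm_le.2 ⟨C + ‖p‖ * D, ?_⟩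
  rintro _ ⟨y, hy, rfl⟩
  calc ‖f y - inner ℝ p y‖ ≤ ‖f y‖ + ‖inner ℝ p y‖ := norm_sub_le _ _
    _ ≤ C + ‖p‖ * D := by
      gcongr
      · exact hC _ (mem_image_of_mem f hy)
      · exact (norm_inner_le_norm p y).trans (by gcongr; exact hD y hy)

lemma two_mul_inner_le_osc_add_osc (hU : IsBounded U) (hf : IsBounded (f '' U))
    (p : EuclideanSpace ℝ (Fin d)) {y : EuclideanSpace ℝ (Fin d)} (hy : y ∈ U) (hy' : -y ∈ U) :
    2 * inner ℝ p y ≤ osc (fun y => f y - inner ℝ p y) U + osc f U := by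
  have hψ := sub_le_osc (isBounded_image_sub_inner hU hf p) hy' hy
  have hφ := sub_le_osc hf hy hy'
  simp only [inner_neg_right] at hψ
  linarith

lemma two_mul_mul_norm_le_osc_add_osc {s : ℝ} (hs : 0 < s)
    (hf : IsBounded (f '' ball 0 s)) (p : EuclideanSpace ℝ (Fin d)) :
    2 * s * ‖p‖ ≤ osc (fun y => f y - inner ℝ p y) (ball 0 s) + osc f (ball 0 s) := by
  set D := osc (fun y => f y - inner ℝ p y) (ball 0 s) + osc f (ball 0 s)
  have hball : ball (0 : EuclideanSpace ℝ (Fin d)) s ⊆ {y | 2 * inner ℝ p y ≤ D} := fun y hy =>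
    two_mul_inner_le_osc_add_osc isBounded_ball hf p hy (by simpa using hy)
  have hclosed : closedBall (0 : EuclideanSpace ℝ (Fin d)) s ⊆ {y | 2 * inner ℝ p y ≤ D} := by
    rw [← closure_ball 0 hs.ne']
    exact closure_minimal hball (isClosed_le (by fun_prop) continuous_const)
  -- `y = (s / ‖p‖) • p` has `p·y = s ‖p‖` and `‖y‖ ≤ s`, also when `p = 0`
  have hy : (s / ‖p‖) • p ∈ closedBall (0 : EuclideanSpace ℝ (Fin d)) s := by
    rw [mem_closedBall_zero_iff, norm_smul, Real.norm_of_nonneg (by positivity)]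
    rcases eq_or_ne ‖p‖ 0 with hp | hp
    · simp [hp, hs.le]
    · rw [div_mul_cancel₀ s hp]
  have hinner : inner ℝ p ((s / ‖p‖) • p) = s * ‖p‖ := by
    rw [real_inner_smul_right, real_inner_self_eq_norm_sq]
    rcases eq_or_ne ‖p‖ 0 with hp | hp
    · simp [hp]
    · field_simp
  have hD := hclosed hy
  simp only [mem_ofPred_eq, hinner] at hD
  linarith

lemma osc_ball_le_osc_sub_inner_add {r : ℝ} (hr : 0 < r) (hrU : ball 0 r ⊆ U)
    (hU : IsBounded U) (hf : IsBounded (f '' U)) (p : EuclideanSpace ℝ (Fin d)) :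
    osc f (ball 0 r) ≤ osc (fun y => f y - inner ℝ p y) U + 2 * r * ‖p‖ := by
  refine osc_le_of_forall_sub_le ⟨0, mem_ball_self hr⟩ fun x hx y hy => ?_
  have hψ := sub_le_osc (isBounded_image_sub_inner hU hf p) (hrU hx) (hrU hy)
  have hxy : ‖x - y‖ ≤ 2 * r := by
    rw [mem_ball_zero_iff] at hx hy
    linarith [norm_sub_le x y]
  have hlin : inner ℝ p (x - y) ≤ 2 * r * ‖p‖ := calc
    inner ℝ p (x - y) ≤ ‖p‖ * ‖x - y‖ := real_inner_le_norm p _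
    _ ≤ 2 * r * ‖p‖ := by rw [mul_comm]; gcongr
  simp only [inner_sub_right] at hlin
  linarith

end

theorem stmt2_general {d : ℕ} (h R s M : ℝ) (hh : 0 ≤ h) (hs : h < s) (hsR : s < R)
    (p : EuclideanSpace ℝ (Fin d))
    (φ : EuclideanSpace ℝ (Fin d) → ℝ)
    (hbd : ∃ B : ℝ, ∀ x ∈ ball (0 : EuclideanSpace ℝ (Fin d)) R, |φ x| ≤ B)
    (hMp : (s ^ 2)⁻¹ * osc (fun y => φ y - (inner ℝ p y : ℝ)) (ball 0 s) ≤ M) :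
    ‖p‖ ≤ (2 * s)⁻¹ * osc (fun y => φ y - (inner ℝ p y : ℝ)) (ball 0 s)
        + (2 * s)⁻¹ * osc φ (ball 0 s)
    ∧ (2 / s) * osc φ (ball 0 (s / 2)) ≤ 3 * s * M + s⁻¹ * osc φ (ball 0 s) := by
  have hs0 : 0 < s := hh.trans_lt hs
  obtain ⟨B, hB⟩ := hbd
  have hφ : IsBounded (φ '' ball 0 s) := isBounded_iff_forall_norm_le.2
    ⟨B, by rintro _ ⟨x, hx, rfl⟩; exact hB x (ball_subset_ball hsR.le hx)⟩
  have hψM := (inv_mul_le_iff₀ (by positivity)).1 hMp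
  have hp := two_mul_mul_norm_le_osc_add_osc hs0 hφ p
  have hhalf := osc_ball_le_osc_sub_inner_add (half_pos hs0)
    (ball_subset_ball (half_le_self hs0.le)) isBounded_ball hφ p
  constructor
  · rw [← mul_add, le_inv_mul_iff₀ (by positivity)]
    linarith
  · rw [div_mul_eq_mul_div, div_le_iff₀ hs0]
    field_simp
    linarith

/-- If `s^{-2} osc_{B_s}(φ − p·) ≤ M` then `|p| ≤ (2s)⁻¹ osc_{B_s}(φ − p·) + (2s)⁻¹ osc_{B_s} φ`
and `(2/s) osc_{B_{s/2}} φ ≤ 3 s M + s⁻¹ osc_{B_s} φ`. -/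
theorem stmt2 {d : ℕ} (hd : 1 ≤ d) (h R s M : ℝ) (hh : 0 ≤ h) (hs : h < s) (hsR : s < R)
    (hM : 0 ≤ M) (p : EuclideanSpace ℝ (Fin d))
    (φ : EuclideanSpace ℝ (Fin d) → ℝ)
    (hφ : ContinuousOn φ (ball (0 : EuclideanSpace ℝ (Fin d)) R))
    (hbd : ∃ B : ℝ, ∀ x ∈ ball (0 : EuclideanSpace ℝ (Fin d)) R, |φ x| ≤ B)
    (hMp : (s ^ 2)⁻¹ * osc (fun y => φ y - (inner ℝ p y : ℝ)) (ball 0 s) ≤ M) :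
    ‖p‖ ≤ (2 * s)⁻¹ * osc (fun y => φ y - (inner ℝ p y : ℝ)) (ball 0 s)
        + (2 * s)⁻¹ * osc φ (ball 0 s)
    ∧ (2 / s) * osc φ (ball 0 (s / 2)) ≤ 3 * s * M + s⁻¹ * osc φ (ball 0 s) :=
  stmt2_general h R s M hh hs hsR p φ hbd hMp
end

section
/- Let d ≥ 3, 0 < λ ≤ Λ, γ := max{1/2, 1 − λ/(2Λ)}, ℓ ≥ 1, h := (2/λ)(2ℓ)^{2−γ}. Define φ(x) := m − (h/γ)(ℓ² + |x|²)^{γ/2}. Then for every symmetric matrix A with eigenvalues in [λ,Λ] and every x, −tr(A D²φ(x)) ≥ h(ℓ²+|x|²)^{γ/2−1}((d−1)λ − Λ(1−γ)) > 0, and moreover for |x| ≤ ℓ one has −tr(A D²φ(x)) ≥ 1. -/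
open Matrix

theorem traceAH (d : ℕ) (A : Matrix (Fin d) (Fin d) ℝ) (x : Fin d → ℝ) (c r : ℝ) :
    (A * Matrix.of (fun i j => c * ((if i = j then (1:ℝ) else 0) + r * (x i * x j)))).trace
    = c * ((∑ i, A i i) + r * (x ⬝ᵥ A.mulVec x)) := by
  simp only [Matrix.trace, Matrix.diag, Matrix.mul_apply, Matrix.of_apply, dotProduct,
    Matrix.mulVec, mul_add, mul_ite, mul_one, mul_zero, Finset.sum_add_distrib,
    Finset.sum_ite_eq', Finset.mem_univ, if_true, Finset.mul_sum]
  congr 1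
  · apply Finset.sum_congr rfl; intro i _; ring
  · apply Finset.sum_congr rfl; intro i _
    apply Finset.sum_congr rfl; intro j _; ring

theorem rayleigh (d : ℕ) (lam : ℝ) (A : Matrix (Fin d) (Fin d) ℝ) (x : Fin d → ℝ)
    (hA : ∀ v : Fin d → ℝ, lam * (v ⬝ᵥ v) ≤ v ⬝ᵥ A.mulVec v) :
    lam * ((d:ℝ) - 1) * (x ⬝ᵥ x)^2 ≤
      (x ⬝ᵥ x)^2 * (∑ i, A i i) - (x ⬝ᵥ x) * (x ⬝ᵥ A.mulVec x) := by
  set n : ℝ := x ⬝ᵥ x with hn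
  have nn : n = ∑ j, x j * x j := rfl
  set v : Fin d → (Fin d → ℝ) := fun i j => n * (if j = i then 1 else 0) - x i * x j with hv
  have hsum := Finset.sum_le_sum (fun i (_ : i ∈ Finset.univ) => hA (v i))
  have h1 : ∑ i, lam * (v i ⬝ᵥ v i) = lam * ((d:ℝ) - 1) * n^2 := by
    have hvv : ∀ i, v i ⬝ᵥ v i = n^2 - n * (x i * x i) := by
      intro i
      have : ∀ j, v i j * v i j
          = (if j = i then n^2 - 2*n*(x i * x j) else 0) + (x i * x i) * (x j * x j) := by
        intro j; by_cases hji : j = i <;> simp [hv, hji] <;> ring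
      show ∑ j, v i j * v i j = _
      rw [Finset.sum_congr rfl (fun j _ => this j)]
      simp only [Finset.sum_add_distrib, Finset.sum_ite_eq',
        Finset.mem_univ, if_true, ← Finset.mul_sum, ← nn]
      ring
    rw [Finset.sum_congr rfl (fun i _ => by rw [hvv i])]
    simp only [Finset.sum_sub_distrib, Finset.sum_const,
      Finset.card_univ, Fintype.card_fin, nsmul_eq_mul, ← Finset.mul_sum, ← nn]
    ring
  have h2 : ∑ i, v i ⬝ᵥ A.mulVec (v i) = n^2 * (∑ i, A i i) - n * (x ⬝ᵥ A.mulVec x) := by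
    have hmv : ∀ i j, (A.mulVec (v i)) j = n * A j i - x i * (A.mulVec x j) := by
      intro i j
      show ∑ k, A j k * v i k = _
      have : ∀ k, A j k * v i k
          = (if k = i then n * A j k else 0) - x i * (A j k * x k) := by
        intro k; by_cases hk : k = i <;> simp [hv, hk] <;> ring
      rw [Finset.sum_congr rfl (fun k _ => this k)]
      simp only [Finset.sum_sub_distrib, ← Finset.mul_sum,
        Finset.sum_ite_eq', Finset.mem_univ, if_true]
      rfl
    have hAv : ∀ i, v i ⬝ᵥ A.mulVec (v i)
        = n^2 * A i i - n * x i * (A.mulVec x i) - n * x i * (∑ j, x j * A j i)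
          + (x i * x i) * (x ⬝ᵥ A.mulVec x) := by
      intro i
      show ∑ j, v i j * (A.mulVec (v i)) j = _
      have : ∀ j, v i j * (A.mulVec (v i)) j
          = ((if j = i then n^2 * A j i - n * (x i * (A.mulVec x j)) else 0)
              - n * x i * (x j * A j i)) + (x i * x i) * (x j * (A.mulVec x j)) := by
        intro j; rw [hmv i j]; by_cases hji : j = i <;> simp [hv, hji] <;> ring
      rw [Finset.sum_congr rfl (fun j _ => this j)]
      simp only [Finset.sum_add_distrib, Finset.sum_sub_distrib, Finset.sum_ite_eq',
        Finset.mem_univ, if_true, ← Finset.mul_sum]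
      show _ = n ^ 2 * A i i - n * x i * (A *ᵥ x) i - n * x i * ∑ j, x j * A j i
          + x i * x i * ∑ j, x j * (A *ᵥ x) j
      ring
    rw [Finset.sum_congr rfl (fun i _ => by rw [hAv i])]
    have s2 : ∑ i, n * x i * (∑ j, x j * A j i) = n * (x ⬝ᵥ A.mulVec x) := by
      have : ∀ i, n * x i * (∑ j, x j * A j i) = ∑ j, n * (x j * (A j i * x i)) := by
        intro i; rw [Finset.mul_sum]; exact Finset.sum_congr rfl (fun j _ => by ring)
      rw [Finset.sum_congr rfl (fun i _ => this i), Finset.sum_comm]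
      have : ∀ j, ∑ i, n * (x j * (A j i * x i)) = n * (x j * (A.mulVec x j)) := by
        intro j
        simp only [← Finset.mul_sum]
        rfl
      rw [Finset.sum_congr rfl (fun j _ => this j)]
      simp only [← Finset.mul_sum]
      rfl
    have s1 : ∑ i, n * x i * (A.mulVec x i) = n * (x ⬝ᵥ A.mulVec x) := by
      simp only [Finset.mul_sum, dotProduct]
      exact Finset.sum_congr rfl (fun i _ => by ring)
    have s0 : ∑ i, (x i * x i) * (x ⬝ᵥ A.mulVec x) = n * (x ⬝ᵥ A.mulVec x) := by
      rw [← Finset.sum_mul, ← nn]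
    simp only [Finset.sum_add_distrib, Finset.sum_sub_distrib, s2, s1, s0, ← Finset.mul_sum]
    ring
  rw [h1, h2] at hsum
  linarith [hsum]

set_option maxHeartbeats 1000000 in
/-- The barrier computation for `φ(x) = m − (h/γ)(ℓ² + |x|²)^{γ/2}` with
`γ = max{1/2, 1 − λ/(2Λ)}` and `h = (2/λ)(2ℓ)^{2−γ}`: for every uniformly elliptic
symmetric `A` and every `x`,
`−tr(A D²φ(x)) ≥ h(ℓ²+|x|²)^{γ/2−1}((d−1)λ − Λ(1−γ)) > 0`, and `−tr(A D²φ(x)) ≥ 1`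
for `|x| ≤ ℓ`, where
`D²φ(x) = −h(ℓ²+|x|²)^{γ/2−1}(I + ((γ−2)/(ℓ²+|x|²)) x⊗x)`. -/
theorem stmt4 (d : ℕ) (hd : 3 ≤ d) (lam Lam ℓ : ℝ)
    (hlam : 0 < lam) (hLam : lam ≤ Lam) (hℓ : 1 ≤ ℓ)
    (γ h : ℝ) (hγ : γ = max (1/2) (1 - lam / (2 * Lam)))
    (hh : h = (2 / lam) * (2 * ℓ) ^ ((2:ℝ) - γ))
    (A : Matrix (Fin d) (Fin d) ℝ) (hsymm : A.IsSymm)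
    (hell : ∀ v : Fin d → ℝ,
      lam * (v ⬝ᵥ v) ≤ v ⬝ᵥ A.mulVec v ∧ v ⬝ᵥ A.mulVec v ≤ Lam * (v ⬝ᵥ v))
    (Hess : EuclideanSpace ℝ (Fin d) → Matrix (Fin d) (Fin d) ℝ)
    (hHess : ∀ x, Hess x = Matrix.of fun i j =>
      -h * (ℓ ^ 2 + ‖x‖ ^ 2) ^ (γ / 2 - 1) *
        ((if i = j then (1:ℝ) else 0) + ((γ - 2) / (ℓ ^ 2 + ‖x‖ ^ 2)) * (x i * x j))) :
    ∀ x : EuclideanSpace ℝ (Fin d),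
      (h * (ℓ ^ 2 + ‖x‖ ^ 2) ^ (γ / 2 - 1) * (((d : ℝ) - 1) * lam - Lam * (1 - γ))
          ≤ -(A * Hess x).trace)
      ∧ 0 < h * (ℓ ^ 2 + ‖x‖ ^ 2) ^ (γ / 2 - 1) * (((d : ℝ) - 1) * lam - Lam * (1 - γ))
      ∧ (‖x‖ ≤ ℓ → 1 ≤ -(A * Hess x).trace) := by
  have hΛ : 0 < Lam := lt_of_lt_of_le hlam hLam
  have hℓ0 : 0 < ℓ := lt_of_lt_of_le one_pos hℓ
  have hd3 : (3:ℝ) ≤ (d:ℝ) := by exact_mod_cast hd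
  have hγl : 1/2 ≤ γ := hγ ▸ le_max_left _ _
  have hγu : γ ≤ 1 := by
    rw [hγ]
    apply max_le
    · norm_num
    · have : 0 < lam / (2*Lam) := by positivity
      linarith
  have hγlam : (1 - γ) * (2 * Lam) ≤ lam := by
    have h2 : 1 - lam/(2*Lam) ≤ γ := hγ ▸ le_max_right _ _
    have h3 : 1 - γ ≤ lam / (2*Lam) := by linarith
    calc (1-γ)*(2*Lam) ≤ (lam/(2*Lam))*(2*Lam) :=
          mul_le_mul_of_nonneg_right h3 (by positivity)
      _ = lam := by field_simp
  have hK32 : 3/2*lam ≤ ((d:ℝ)-1)*lam - Lam*(1-γ) := by nlinarith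
  have hK : 0 < ((d:ℝ)-1)*lam - Lam*(1-γ) := by linarith
  have hLam1γ0 : 0 ≤ Lam*(1-γ) := by nlinarith
  have hhpos : 0 < h := by
    rw [hh]
    have : (0:ℝ) < (2*ℓ) ^ ((2:ℝ) - γ) := Real.rpow_pos_of_pos (by linarith) _
    positivity
  intro x
  set K : ℝ := ((d:ℝ)-1)*lam - Lam*(1-γ) with hKdef
  have hnorm : ‖x‖^2 = (x : Fin d → ℝ) ⬝ᵥ (x : Fin d → ℝ) := by
    rw [EuclideanSpace.norm_eq, Real.sq_sqrt (by positivity)]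
    show ∑ i, ‖x i‖^2 = ∑ i, x i * x i
    exact Finset.sum_congr rfl fun i _ => by rw [Real.norm_eq_abs, sq_abs, sq]
  set n : ℝ := (x : Fin d → ℝ) ⬝ᵥ (x : Fin d → ℝ) with hndef
  have hn0 : 0 ≤ n := by rw [← hnorm]; positivity
  set s : ℝ := ℓ ^ 2 + ‖x‖ ^ 2 with hsdef
  have hsn : s = ℓ^2 + n := by rw [hsdef, hnorm]
  have hs : 0 < s := by nlinarith
  have hsnn : n ≤ s := by nlinarith
  set T : ℝ := ∑ i, A i i with hTdef
  set Q : ℝ := (x : Fin d → ℝ) ⬝ᵥ A.mulVec (x : Fin d → ℝ) with hQdef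
  have hQl : lam * n ≤ Q := (hell x).1
  have hQu : Q ≤ Lam * n := (hell x).2
  have hT : (d:ℝ) * lam ≤ T := by
    have hAii : ∀ i, lam ≤ A i i := by
      intro i
      have h1 := (hell (Pi.single i 1)).1
      have e1 : (Pi.single i 1 : Fin d → ℝ) ⬝ᵥ (Pi.single i 1) = 1 := by
        simp [dotProduct, Pi.single_apply]
      have e2 : (Pi.single i 1 : Fin d → ℝ) ⬝ᵥ A.mulVec (Pi.single i 1) = A i i := by
        simp [Matrix.mulVec_single, single_dotProduct]
      rw [e1, e2, mul_one] at h1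
      exact h1
    calc (d:ℝ) * lam = ∑ _i : Fin d, lam := by
          simp [Finset.sum_const, Finset.card_univ, mul_comm]
      _ ≤ T := Finset.sum_le_sum fun i _ => hAii i
  have hray := rayleigh d lam A x (fun v => (hell v).1)
  -- main inequality
  have hmain : K ≤ T + (γ-2)/s * Q := by
    rw [hKdef]
    rcases eq_or_lt_of_le hn0 with hn | hn
    · have hQ0 : Q = 0 := le_antisymm (by rw [← hn] at hQu; linarith [hQu])
        (by rw [← hn] at hQl; linarith [hQl])
      rw [hQ0]
      have : ((d:ℝ)-1)*lam - Lam*(1-γ) ≤ (d:ℝ) * lam := by nlinarith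
      simp only [mul_zero, add_zero]
      linarith
    · have hray' : lam*((d:ℝ)-1)*n ≤ n*T - Q := by
        have h' : n * (lam*((d:ℝ)-1)*n) ≤ n * (n*T - Q) := by
          have e1 : n * (lam*((d:ℝ)-1)*n) = lam*((d:ℝ)-1)*n^2 := by ring
          have e2 : n * (n*T - Q) = n^2*T - n*Q := by ring
          rw [e1, e2]; exact hray
        exact le_of_mul_le_mul_left h' hn
      have hdiv : T + (γ-2)/s * Q = (s*T + (γ-2)*Q)/s := by field_simp
      rw [hdiv, le_div_iff₀ hs]
      have key : n * ((((d:ℝ)-1)*lam - Lam*(1-γ)) * s) ≤ n * (s*T + (γ-2)*Q) := by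
        have hsmul := mul_le_mul_of_nonneg_left hray' hs.le
        rcases le_or_gt (s - (2-γ)*n) 0 with hc | hc
        · have hq := mul_le_mul_of_nonpos_right hQu hc
          have hpos : 0 ≤ Lam * ((2-γ) * (n * (s - n))) := by
            apply mul_nonneg hΛ.le
            apply mul_nonneg (by linarith)
            apply mul_nonneg hn.le (by linarith)
          nlinarith [hsmul, hq, hpos]
        · have hq : 0 ≤ Q * (s - (2-γ)*n) := mul_nonneg (by nlinarith) hc.le
          have hpos : 0 ≤ n * s * (Lam * (1-γ)) :=
            mul_nonneg (mul_nonneg hn.le hs.le) hLam1γ0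
          nlinarith [hsmul, hq, hpos]
      exact le_of_mul_le_mul_left key hn
  have htr : (A * Hess x).trace = (-h * s ^ (γ/2-1)) * (T + (γ-2)/s * Q) := by
    rw [hHess x]
    exact traceAH d A x (-h * s ^ (γ/2-1)) ((γ-2)/s)
  have hcpos : 0 < h * s ^ (γ/2-1) := mul_pos hhpos (Real.rpow_pos_of_pos hs _)
  have hgoal1 : h * s ^ (γ/2-1) * K ≤ -(A * Hess x).trace := by
    rw [htr]
    have : -((-h * s ^ (γ/2-1)) * (T + (γ-2)/s * Q))
        = (h * s ^ (γ/2-1)) * (T + (γ-2)/s * Q) := by ring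
    rw [this]
    exact mul_le_mul_of_nonneg_left hmain hcpos.le
  refine ⟨hgoal1, mul_pos hcpos hK, ?_⟩
  intro hxl
  have hxsq : ‖x‖^2 ≤ ℓ^2 := by nlinarith [norm_nonneg x]
  have hsle : s ≤ 2*ℓ^2 := by rw [hsdef]; nlinarith
  have hse : (2*ℓ^2) ^ (γ/2-1) ≤ s ^ (γ/2-1) :=
    Real.rpow_le_rpow_of_nonpos hs hsle (by linarith)
  have ha : (0:ℝ) < 2*ℓ^2 := by positivity
  have hP1 : (0:ℝ) < (2*ℓ) ^ ((2:ℝ)-γ) := Real.rpow_pos_of_pos (by linarith) _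
  have hP2 : (0:ℝ) < (2*ℓ^2) ^ (γ/2-1) := Real.rpow_pos_of_pos ha _
  have hprod : 1 ≤ (2*ℓ)^((2:ℝ)-γ) * (2*ℓ^2)^(γ/2-1) := by
    have keyb : ((2*ℓ):ℝ)^((2:ℝ)-γ) = ((4*ℓ^2):ℝ)^((1:ℝ)-γ/2) := by
      rw [show ((4:ℝ)*ℓ^2) = (2*ℓ)^(2:ℕ) by ring, ← Real.rpow_natCast (2*ℓ) 2,
        ← Real.rpow_mul (by linarith)]
      congr 1
      push_cast
      ring
    have h4 : ((2*ℓ^2):ℝ)^((1:ℝ)-γ/2) ≤ ((4*ℓ^2):ℝ)^((1:ℝ)-γ/2) :=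
      Real.rpow_le_rpow ha.le (by nlinarith) (by linarith)
    have hone : ((2*ℓ^2):ℝ)^((1:ℝ)-γ/2) * (2*ℓ^2)^(γ/2-1) = 1 := by
      rw [← Real.rpow_add ha]
      norm_num
    calc (1:ℝ) = ((2*ℓ^2):ℝ)^((1:ℝ)-γ/2) * (2*ℓ^2)^(γ/2-1) := hone.symm
      _ ≤ ((4*ℓ^2):ℝ)^((1:ℝ)-γ/2) * (2*ℓ^2)^(γ/2-1) :=
          mul_le_mul_of_nonneg_right h4 hP2.le
      _ = (2*ℓ)^((2:ℝ)-γ) * (2*ℓ^2)^(γ/2-1) := by rw [keyb]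
  have step1 : (2*ℓ^2)^(γ/2-1) * (3/2*lam) ≤ s ^ (γ/2-1) * K :=
    mul_le_mul hse hK32 (by positivity) (Real.rpow_pos_of_pos hs _).le
  have hfrac : 0 < (2:ℝ)/lam * ((2*ℓ)^((2:ℝ)-γ)) := by positivity
  have step2 : ((2:ℝ)/lam * ((2*ℓ)^((2:ℝ)-γ))) * ((2*ℓ^2)^(γ/2-1) * (3/2*lam))
      ≤ ((2:ℝ)/lam * ((2*ℓ)^((2:ℝ)-γ))) * (s ^ (γ/2-1) * K) :=
    mul_le_mul_of_nonneg_left step1 hfrac.le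
  have heq1 : ((2:ℝ)/lam * ((2*ℓ)^((2:ℝ)-γ))) * ((2*ℓ^2)^(γ/2-1) * (3/2*lam))
      = 3 * ((2*ℓ)^((2:ℝ)-γ) * (2*ℓ^2)^(γ/2-1)) := by
    field_simp
  have heq2 : ((2:ℝ)/lam * ((2*ℓ)^((2:ℝ)-γ))) * (s ^ (γ/2-1) * K)
      = h * s ^ (γ/2-1) * K := by rw [hh]; ring
  have : (1:ℝ) ≤ h * s ^ (γ/2-1) * K := by
    rw [heq1, heq2] at step2
    linarith only [hprod, step2]
  linarith only [hgoal1, this]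
end
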